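/- For n ≥ 2, the number of Dyck n-paths whose terminal descent has even length and all of whose other descents to ground level (if any) have odd length equals the Catalan number C_{n-1}. -/

import Mathlib

inductive Step : Type
  | U : Step
  | D : Step
deriving DecidableEq

open Step

/-- The path stays weakly above ground level: every prefix has at least as many `U`s as `D`s. -/
def NonnegPrefixes (p : List Step) : Prop :=
  ∀ q : List Step, q <+: p → q.count D ≤ q.count U

/-- A Dyck path: equally many upsteps and downsteps, never dipping below ground level. -/
def IsDyck (p : List Step) : Prop :=
  p.count U = p.count D ∧ NonnegPrefixes p

/-- A Dyck `n`-path: a Dyck path with `n` upsteps (semilength `n`). -/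
def IsDyckN (n : ℕ) (p : List Step) : Prop :=
  IsDyck p ∧ p.count U = n

/-- Length of the terminal descent (maximal final run of downsteps). -/
def termDesc (p : List Step) : ℕ :=
  (p.reverse.takeWhile (fun s => s == D)).length

/-- Number of returns: downsteps that bring the path back to ground level. -/
def returnCount (p : List Step) : ℕ :=
  ((List.range p.length).filter
    (fun i => (p.take (i+1)).count U == (p.take (i+1)).count D)).length

/-- `GroundDescent p q m r` : `p = q ++ D^m ++ r` is a maximal run of `m ≥ 1` downsteps
ending at ground level. -/
def GroundDescent (p q : List Step) (m : ℕ) (r : List Step) : Prop :=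
  p = q ++ List.replicate m D ++ r ∧ 1 ≤ m ∧
  q.getLast? ≠ some D ∧ r.head? ≠ some D ∧
  q.count U = q.count D + m

/-- All descents to ground level other than the terminal one have odd length. -/
def OddNonterminalGroundDescents (p : List Step) : Prop :=
  ∀ q m r, GroundDescent p q m r → r ≠ [] → Odd m

/-- No occurrence of `UD` starting at ground level. -/
def HillFree (p : List Step) : Prop :=
  ∀ q r : List Step, p = q ++ [U, D] ++ r → q.count U ≠ q.count D

/-- No occurrence of `UDU` starting at ground level. -/
def EarlyHillFree (p : List Step) : Prop :=
  ∀ q r : List Step, p = q ++ [U, D, U] ++ r → q.count U ≠ q.count D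

/-- Number of early hills: occurrences of `UDU` starting at ground level. -/
def earlyHillCount (p : List Step) : ℕ :=
  ((List.range p.length).filter
    (fun i => decide ((p.take i).count U = (p.take i).count D ∧
      (p.drop i).take 3 = [U, D, U]))).length

/-!
Decompose a nonempty Dyck path at its first return: `w = U a D b`. Its terminal descent is that
of `b` if `b` is nonempty and one longer than that of `a` otherwise; its nonterminal ground
descents are those of `b`, together with the descent of length `termDesc a + 1` closing the first
arch when `b` is nonempty. Writing `E n`, `O n` for the numbers of Dyck `n`-paths with even and odd
terminal descent and `G n` for the paths counted by the theorem, this gives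
`E (k+1) = O k + ∑_{j<k} C j * E (k-j)` and `G (k+1) = O k + ∑_{j<k} E j * G (k-j)`.
As `E k + O k = C k`, the first recurrence rearranges to `E (k+1) = ∑_{j<k} E j * C (k-j)`,
and induction on the second, starting from `G 1 = 0`, yields `G (k+2) = O (k+1) + E (k+1) = C (k+1)`.
-/

open Finset

@[simp] lemma termDesc_nil : termDesc [] = 0 := rfl

@[simp] lemma termDesc_append_D (l : List Step) : termDesc (l ++ [D]) = termDesc l + 1 := by
  simp [termDesc]

@[simp] lemma termDesc_cons_U (l : List Step) : termDesc (U :: l) = termDesc l := by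
  simp only [termDesc, List.reverse_cons, List.takeWhile_append]
  split_ifs with h
  · simp [h]
  · rfl

lemma termDesc_append_of_U_mem {l r : List Step} (h : U ∈ r) :
    termDesc (l ++ r) = termDesc r := by
  simp only [termDesc, List.reverse_append, List.takeWhile_append]
  rw [if_neg]
  intro hlen
  have hall := (List.takeWhile_prefix _).eq_of_length hlen
  have := List.mem_takeWhile_imp (hall.symm ▸ List.mem_reverse.mpr h)
  simp at this

lemma termDesc_append_replicate {l : List Step} (hl : l.getLast? ≠ some D) (m : ℕ) :
    termDesc (l ++ List.replicate m D) = m := by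
  induction m with
  | zero =>
    rcases List.eq_nil_or_concat l with rfl | ⟨l', s, rfl⟩
    · rfl
    · cases s
      · simp [termDesc]
      · simp at hl
  | succ m ih => rw [List.replicate_succ', ← List.append_assoc, termDesc_append_D, ih]

lemma exists_eq_append_replicate_termDesc (l : List Step) :
    ∃ l', l = l' ++ List.replicate (termDesc l) D ∧ l'.getLast? ≠ some D := by
  induction l using List.reverseRecOn with
  | nil => exact ⟨[], rfl, by simp⟩
  | append_singleton l s ih =>
    cases s
    · exact ⟨l ++ [U], by simp [termDesc], by simp⟩
    · obtain ⟨l', hl, hl'⟩ := ih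
      exact ⟨l', by rw [termDesc_append_D, List.replicate_succ', ← List.append_assoc, ← hl], hl'⟩

lemma NonnegPrefixes.of_prefix {p q : List Step} (hp : NonnegPrefixes p) (hq : q <+: p) :
    NonnegPrefixes q :=
  fun t ht => hp t (ht.trans hq)

lemma NonnegPrefixes.exists_eq_U_cons {p : List Step} (hp : NonnegPrefixes p) (hne : p ≠ []) :
    ∃ t, p = U :: t := by
  obtain _ | ⟨_ | _, t⟩ := p
  · exact absurd rfl hne
  · exact ⟨t, rfl⟩
  · simpa using hp [D] ⟨t, rfl⟩

lemma NonnegPrefixes.exists_eq_append_D {x : List Step} (hx : NonnegPrefixes x) (hne : x ≠ [])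
    (hbal : x.count U = x.count D) : ∃ x₀, x = x₀ ++ [D] := by
  obtain rfl | ⟨x₀, _ | _, rfl⟩ := List.eq_nil_or_concat x
  · exact absurd rfl hne
  · have := hx x₀ ⟨[U], by simp⟩
    simp at hbal
    omega
  · exact ⟨x₀, by simp⟩

lemma NonnegPrefixes.head?_ne_D {x y : List Step} (hp : NonnegPrefixes (x ++ y))
    (hbal : x.count U = x.count D) : y.head? ≠ some D := by
  intro hy
  obtain ⟨y', rfl⟩ : ∃ y', y = D :: y' := by
    obtain _ | ⟨s, y'⟩ := y <;> simp_all
  have := hp (x ++ [D]) ⟨y', by simp⟩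
  simp at this
  omega

lemma oddNonterminalGroundDescents_nil : OddNonterminalGroundDescents [] := by
  rintro q m r ⟨h, hm, -⟩
  have := congrArg List.length h
  simp at this
  omega

def OddProperGroundPrefixes (p : List Step) : Prop :=
  ∀ x y, p = x ++ y → x ≠ [] → y ≠ [] → x.count U = x.count D → Odd (termDesc x)

/-- A ground descent is the terminal descent of the nonempty balanced prefix that it ends. -/
theorem oddNonterminalGroundDescents_iff {p : List Step} (hp : NonnegPrefixes p) :
    OddNonterminalGroundDescents p ↔ OddProperGroundPrefixes p := by
  constructor
  · rintro h x y rfl hx hy hbal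
    obtain ⟨x', hx', hlast⟩ := exists_eq_append_replicate_termDesc x
    obtain ⟨x₀, hx₀⟩ := (hp.of_prefix (List.prefix_append x y)).exists_eq_append_D hx hbal
    refine h x' (termDesc x) y ⟨by rw [← hx'], by simp [hx₀], hlast, hp.head?_ne_D hbal, ?_⟩ hy
    rw [hx'] at hbal
    simpa [List.count_replicate] using hbal
  · rintro h x' m y ⟨rfl, hm, hlast, -, hcount⟩ hy
    have hx : x' ++ List.replicate m D ≠ [] := by simp; omega
    have := h _ y rfl hx hy (by simp [List.count_replicate]; omega)
    rwa [termDesc_append_replicate hlast] at this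

lemma count_D_lt_count_U_of_append_eq_arch {q x y : List Step} (hq : NonnegPrefixes q)
    (h : x ++ y = U :: q ++ [D]) (hx : x ≠ []) (hy : y ≠ []) : x.count D < x.count U := by
  obtain _ | ⟨s, x₀⟩ := x
  · exact absurd rfl hx
  obtain ⟨rfl, h'⟩ : s = U ∧ x₀ ++ y = q ++ [D] := by simpa using h
  have hx₀ : x₀ <+: q := by
    rcases List.append_eq_append_iff.mp h' with ⟨c, rfl, -⟩ | ⟨c, rfl, hc⟩
    · exact List.prefix_append x₀ c
    · obtain rfl : c = [] := by
        rcases c with _ | ⟨_, _ | _⟩ <;> simp_all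
      simp
  have := hq x₀ hx₀
  simp
  omega

lemma oddProperGroundPrefixes_arch_append {q r : List Step} (hq : IsDyck q)
    (hr : NonnegPrefixes r) :
    OddProperGroundPrefixes (U :: q ++ [D] ++ r) ↔
      (r ≠ [] → Even (termDesc q)) ∧ OddProperGroundPrefixes r := by
  have hbal : (U :: q ++ [D]).count U = (U :: q ++ [D]).count D := by simp [hq.1]
  have hodd : Odd (termDesc (U :: q ++ [D])) ↔ Even (termDesc q) := by
    simp [Nat.odd_add_one]
  have hU : ∀ x y, r = x ++ y → x ≠ [] → U ∈ x := fun x y hxy hx => by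
    obtain ⟨t, rfl⟩ := (hr.of_prefix ⟨y, hxy.symm⟩).exists_eq_U_cons hx
    simp
  constructor
  · intro h
    refine ⟨fun hr_ne => hodd.mp (h _ r rfl (by simp) hr_ne hbal),
      fun x y hxy hx hy hxbal => ?_⟩
    have := h (U :: q ++ [D] ++ x) y (by simp [hxy]) (by simp) hy
      (by simp only [List.count_append] at hbal ⊢; omega)
    rwa [termDesc_append_of_U_mem (hU x y hxy hx)] at this
  · rintro ⟨hA, hr'⟩ x y hxy hx hy hxbal
    rcases List.append_eq_append_iff.mp hxy with ⟨c, rfl, rfl⟩ | ⟨c, hc, rfl⟩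
    · rcases eq_or_ne c [] with rfl | hc_ne
      · simpa using hodd.mpr (hA (by simpa using hy))
      · rw [termDesc_append_of_U_mem (hU c y rfl hc_ne)]
        exact hr' c y rfl hc_ne hy (by simp only [List.count_append] at hbal hxbal; omega)
    · rcases eq_or_ne c [] with rfl | hc_ne
      · simp only [List.append_nil] at hc
        subst hc
        exact hodd.mpr (hA (by simpa using hy))
      · have := count_D_lt_count_U_of_append_eq_arch hq.2 hc.symm hx hc_ne
        omega

lemma Finset.card_filter_product_of_iff {α β : Type*} {s : Finset α} {t : Finset β}
    {P : α × β → Prop} [DecidablePred P] (p : α → Prop) (q : β → Prop) [DecidablePred p]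
    [DecidablePred q] (h : ∀ a ∈ s, ∀ b ∈ t, P (a, b) ↔ p a ∧ q b) :
    #{x ∈ s ×ˢ t | P x} = #{a ∈ s | p a} * #{b ∈ t | q b} := by
  rw [← card_product, ← filter_product]
  congr 1
  refine filter_congr fun x hx => ?_
  exact h x.1 (mem_product.mp hx).1 x.2 (mem_product.mp hx).2

def DyckStep.toStep : DyckStep → Step
  | .U => Step.U
  | .D => Step.D

def Step.toDyckStep : Step → DyckStep
  | U => .U
  | D => .D

@[simp] lemma Step.toDyckStep_toStep (s : Step) : s.toDyckStep.toStep = s := by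
  cases s <;> rfl

lemma DyckStep.toStep_injective : Function.Injective DyckStep.toStep := by
  rintro (_ | _) (_ | _) h <;> first | rfl | cases h

@[simp] lemma DyckStep.count_map_toStep_U (l : List DyckStep) :
    (l.map DyckStep.toStep).count Step.U = l.count DyckStep.U :=
  List.count_map_of_injective _ _ DyckStep.toStep_injective DyckStep.U

@[simp] lemma DyckStep.count_map_toStep_D (l : List DyckStep) :
    (l.map DyckStep.toStep).count Step.D = l.count DyckStep.D :=
  List.count_map_of_injective _ _ DyckStep.toStep_injective DyckStep.D

namespace DyckWord

variable {n : ℕ} {a b v w : DyckWord}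

def toSteps (w : DyckWord) : List Step := w.toList.map DyckStep.toStep

@[simp] lemma count_U_toSteps : w.toSteps.count U = w.semilength :=
  DyckStep.count_map_toStep_U _

@[simp] lemma count_D_toSteps : w.toSteps.count D = w.semilength :=
  (DyckStep.count_map_toStep_D _).trans w.semilength_eq_count_D.symm

lemma isDyck_toSteps (w : DyckWord) : IsDyck w.toSteps := by
  refine ⟨by simp, fun q hq => ?_⟩
  rw [List.prefix_iff_eq_take.mp hq, toSteps, ← List.map_take,
    DyckStep.count_map_toStep_D, DyckStep.count_map_toStep_U]
  exact w.count_D_le_count_U _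

lemma toSteps_injective : Function.Injective toSteps := fun _ _ h =>
  DyckWord.ext ((List.map_injective_iff.mpr DyckStep.toStep_injective) h)

lemma exists_toSteps_eq {p : List Step} (hp : IsDyck p) : ∃ w : DyckWord, w.toSteps = p := by
  have hmap (l : List Step) : (l.map Step.toDyckStep).map DyckStep.toStep = l := by
    simp [Function.comp_def]
  have hU (l : List Step) : (l.map Step.toDyckStep).count .U = l.count U := by
    rw [← DyckStep.count_map_toStep_U, hmap]
  have hD (l : List Step) : (l.map Step.toDyckStep).count .D = l.count D := by
    rw [← DyckStep.count_map_toStep_D, hmap]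
  refine ⟨⟨p.map Step.toDyckStep, by rw [hU, hD, hp.1], fun i => ?_⟩, hmap p⟩
  rw [← List.map_take, hU, hD]
  exact hp.2 _ (List.take_prefix i p)

@[simp] lemma toSteps_zero : (0 : DyckWord).toSteps = [] := rfl

@[simp] lemma toSteps_add : (v + w).toSteps = v.toSteps ++ w.toSteps := List.map_append ..

@[simp] lemma toSteps_nest : w.nest.toSteps = U :: w.toSteps ++ [D] := by
  simp [toSteps, nest, DyckStep.toStep]

lemma toSteps_eq_nil : w.toSteps = [] ↔ w = 0 := by
  simp [toSteps, toList_eq_nil]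

lemma toSteps_ne_nil (hw : w ≠ 0) : w.toSteps ≠ [] :=
  toSteps_eq_nil.not.mpr hw

lemma U_mem_toSteps (hw : w ≠ 0) : U ∈ w.toSteps := by
  obtain ⟨t, ht⟩ := (isDyck_toSteps w).2.exists_eq_U_cons (toSteps_ne_nil hw)
  simp [ht]

lemma termDesc_toSteps_nest_add (hb : b ≠ 0) :
    termDesc (a.nest + b).toSteps = termDesc b.toSteps := by
  rw [toSteps_add, termDesc_append_of_U_mem (U_mem_toSteps hb)]

lemma oddNonterminalGroundDescents_toSteps_nest_add :
    OddNonterminalGroundDescents (a.nest + b).toSteps ↔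
      (b ≠ 0 → Even (termDesc a.toSteps)) ∧ OddNonterminalGroundDescents b.toSteps := by
  rw [oddNonterminalGroundDescents_iff (isDyck_toSteps _).2,
    oddNonterminalGroundDescents_iff (isDyck_toSteps b).2, toSteps_add, toSteps_nest,
    oddProperGroundPrefixes_arch_append (isDyck_toSteps a) (isDyck_toSteps b).2]
  rw [ne_eq, toSteps_eq_nil]

def ofSemilength (n : ℕ) : Finset DyckWord :=
  univ.map (Function.Embedding.subtype fun w : DyckWord => w.semilength = n)

@[simp] lemma mem_ofSemilength : w ∈ ofSemilength n ↔ w.semilength = n := by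
  simp [ofSemilength]

lemma card_ofSemilength (n : ℕ) : #(ofSemilength n) = catalan n := by
  simp [ofSemilength, card_dyckWord_semilength_eq_catalan]

lemma ofSemilength_zero : ofSemilength 0 = {0} := by
  ext w
  rw [mem_ofSemilength, mem_singleton, ← toList_eq_nil, ← List.length_eq_zero_iff,
    ← two_mul_semilength_eq_length]
  omega

lemma ne_zero_of_mem_ofSemilength (hw : w ∈ ofSemilength n) (hn : n ≠ 0) : w ≠ 0 := by
  rintro rfl
  simp_all [eq_comm]

theorem card_filter_ofSemilength_succ (P : DyckWord → Prop) [DecidablePred P] (k : ℕ) :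
    #{w ∈ ofSemilength (k + 1) | P w} =
      ∑ j ∈ range (k + 1), #{x ∈ ofSemilength j ×ˢ ofSemilength (k - j) | P (x.1.nest + x.2)} := by
  rw [← card_sigma]
  symm
  refine card_nbij' (fun x => x.2.1.nest + x.2.2)
    (fun w => ⟨w.insidePart.semilength, w.insidePart, w.outsidePart⟩) ?_ ?_ ?_ ?_
  · rintro ⟨j, a, b⟩ hx
    simp only [coe_sigma, Set.mem_sigma_iff, coe_range, Set.mem_Iio, coe_filter, mem_product,
      mem_ofSemilength, Set.mem_ofPred_eq] at hx ⊢
    refine ⟨?_, hx.2.2⟩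
    simp only [semilength_add, semilength_nest, hx.2.1.1, hx.2.1.2]
    omega
  · intro w hw
    simp only [coe_filter, mem_ofSemilength, Set.mem_ofPred_eq] at hw
    have hw0 : w ≠ 0 := by rintro rfl; simp at hw
    have hlen := semilength_insidePart_add_semilength_outsidePart_add_one hw0
    simp only [coe_sigma, Set.mem_sigma_iff, coe_range, Set.mem_Iio, coe_filter, mem_product,
      mem_ofSemilength, Set.mem_ofPred_eq, nest_insidePart_add_outsidePart hw0]
    exact ⟨by omega, ⟨trivial, by omega⟩, hw.2⟩
  · rintro ⟨j, a, b⟩ hx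
    simp only [coe_sigma, Set.mem_sigma_iff, coe_range, Set.mem_Iio, coe_filter, mem_product,
      mem_ofSemilength, Set.mem_ofPred_eq] at hx
    simp [insidePart_add, outsidePart_add, hx.2.1.1]
  · intro w hw
    simp only [coe_filter, mem_ofSemilength, Set.mem_ofPred_eq] at hw
    exact nest_insidePart_add_outsidePart (by rintro rfl; simp at hw)

def evenTermDescCount (n : ℕ) : ℕ := #{w ∈ ofSemilength n | Even (termDesc w.toSteps)}

def oddTermDescCount (n : ℕ) : ℕ := #{w ∈ ofSemilength n | Odd (termDesc w.toSteps)}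

open Classical in
noncomputable def evenTermOddGroundCount (n : ℕ) : ℕ :=
  #{w ∈ ofSemilength n | Even (termDesc w.toSteps) ∧ OddNonterminalGroundDescents w.toSteps}

lemma evenTermDescCount_add_oddTermDescCount (n : ℕ) :
    evenTermDescCount n + oddTermDescCount n = catalan n := by
  rw [← card_ofSemilength, evenTermDescCount, oddTermDescCount]
  simp_rw [← Nat.not_even_iff_odd]
  exact card_filter_add_card_filter_not _

lemma oddTermDescCount_zero : oddTermDescCount 0 = 0 := by
  simp [oddTermDescCount, ofSemilength_zero]

lemma evenTermDescCount_zero : evenTermDescCount 0 = 1 := by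
  simpa [oddTermDescCount_zero] using evenTermDescCount_add_oddTermDescCount 0

lemma evenTermDescCount_succ (k : ℕ) :
    evenTermDescCount (k + 1) =
      oddTermDescCount k + ∑ j ∈ range k, catalan j * evenTermDescCount (k - j) := by
  rw [evenTermDescCount, card_filter_ofSemilength_succ, sum_range_succ, add_comm, Nat.sub_self,
    ofSemilength_zero]
  congr 1
  · rw [card_filter_product_of_iff (fun a => Odd (termDesc a.toSteps)) (fun _ => True)]
    · simp [oddTermDescCount]
    · intro a _ b hb
      simp [mem_singleton.mp hb, Nat.even_add_one]
  · refine sum_congr rfl fun j hj => ?_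
    rw [card_filter_product_of_iff (fun _ => True) (fun b => Even (termDesc b.toSteps))]
    · simp [card_ofSemilength, evenTermDescCount]
    · intro a _ b hb
      rw [termDesc_toSteps_nest_add (ne_zero_of_mem_ofSemilength hb (by simp at hj; omega))]
      simp

lemma evenTermOddGroundCount_succ (k : ℕ) :
    evenTermOddGroundCount (k + 1) =
      oddTermDescCount k +
        ∑ j ∈ range k, evenTermDescCount j * evenTermOddGroundCount (k - j) := by
  classical
  rw [evenTermOddGroundCount, card_filter_ofSemilength_succ, sum_range_succ, add_comm,
    Nat.sub_self, ofSemilength_zero]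
  congr 1
  · rw [card_filter_product_of_iff (fun a => Odd (termDesc a.toSteps)) (fun _ => True)]
    · simp [oddTermDescCount]
    · intro a _ b hb
      rw [mem_singleton.mp hb, oddNonterminalGroundDescents_toSteps_nest_add]
      simp [oddNonterminalGroundDescents_nil, Nat.even_add_one]
  · refine sum_congr rfl fun j hj => ?_
    rw [card_filter_product_of_iff (fun a => Even (termDesc a.toSteps))
      (fun b => Even (termDesc b.toSteps) ∧ OddNonterminalGroundDescents b.toSteps)]
    · simp [evenTermDescCount, evenTermOddGroundCount]
    · intro a _ b hb
      have hb0 := ne_zero_of_mem_ofSemilength hb (by simp at hj; omega)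
      rw [termDesc_toSteps_nest_add hb0, oddNonterminalGroundDescents_toSteps_nest_add]
      tauto

lemma evenTermDescCount_succ_eq_sum (k : ℕ) :
    evenTermDescCount (k + 1) = ∑ j ∈ range k, evenTermDescCount j * catalan (k - j) := by
  have hreflect : ∑ j ∈ range (k + 1), evenTermDescCount j * catalan (k - j) =
      ∑ j ∈ range (k + 1), catalan j * evenTermDescCount (k - j) := by
    rw [← sum_range_reflect]
    refine sum_congr rfl fun j hj => ?_
    rw [mul_comm, show k + 1 - 1 - j = k - j by omega,
      show k - (k - j) = j by simp at hj; omega]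
  rw [sum_range_succ, sum_range_succ, Nat.sub_self, catalan_zero, evenTermDescCount_zero]
    at hreflect
  have := evenTermDescCount_add_oddTermDescCount k
  rw [evenTermDescCount_succ]
  omega

lemma evenTermOddGroundCount_one : evenTermOddGroundCount 1 = 0 := by
  simpa [oddTermDescCount_zero] using evenTermOddGroundCount_succ 0

theorem evenTermOddGroundCount_add_two (k : ℕ) :
    evenTermOddGroundCount (k + 2) = catalan (k + 1) := by
  induction k using Nat.strong_induction_on with
  | _ k ih =>
  have hsum : ∑ j ∈ range k, evenTermDescCount j * evenTermOddGroundCount (k + 1 - j) =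
      ∑ j ∈ range k, evenTermDescCount j * catalan (k - j) := by
    refine sum_congr rfl fun j hj => ?_
    simp only [mem_range] at hj
    rw [show k + 1 - j = k - 1 - j + 2 by omega, ih _ (by omega),
      show k - 1 - j + 1 = k - j by omega]
  rw [evenTermOddGroundCount_succ, sum_range_succ, show k + 1 - k = 1 by omega,
    evenTermOddGroundCount_one, mul_zero, add_zero, hsum, ← evenTermDescCount_succ_eq_sum,
    add_comm, evenTermDescCount_add_oddTermDescCount]

theorem natCard_eq_evenTermOddGroundCount (n : ℕ) :
    Nat.card {p : List Step // IsDyckN n p ∧ Even (termDesc p) ∧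
      OddNonterminalGroundDescents p} = evenTermOddGroundCount n := by
  classical
  rw [evenTermOddGroundCount, ← Nat.card_eq_finsetCard]
  symm
  refine Nat.card_congr (Equiv.ofBijective
    (fun w => ⟨w.1.toSteps, ⟨isDyck_toSteps _, ?_⟩, (mem_filter.mp w.2).2⟩) ⟨?_, ?_⟩)
  · simpa using (mem_filter.mp w.2).1
  · exact fun v w h => Subtype.ext (toSteps_injective (congrArg Subtype.val h))
  · rintro ⟨p, ⟨hp, hn⟩, hgood⟩
    obtain ⟨w, rfl⟩ := exists_toSteps_eq hp
    exact ⟨⟨w, mem_filter.mpr ⟨by simpa using hn, hgood⟩⟩, rfl⟩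

end DyckWord

/-- For `n ≥ 2`, the number of Dyck `n`-paths whose terminal descent has even length and all
of whose other descents to ground level have odd length equals the Catalan number `C_{n-1}`. -/
theorem stmt0 (n : ℕ) (hn : 2 ≤ n) :
    Nat.card {p : List Step // IsDyckN n p ∧ Even (termDesc p) ∧
      OddNonterminalGroundDescents p} = catalan (n - 1) := by
  obtain ⟨k, rfl⟩ := Nat.exists_eq_add_of_le' hn
  rw [DyckWord.natCard_eq_evenTermOddGroundCount, DyckWord.evenTermOddGroundCount_add_two]
  rfl
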